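/- For every semi-conditional grammar of degree (1,1) using the derivation relation that includes the rewritten symbol in the context check, there is an equivalent semi-conditional grammar of degree (1,1) using the derivation relation that excludes the rewritten symbol; hence SC(1,1) ⊆ SC'(1,1). -/
import Mathlib


/-- Symbols: nonterminals `N` plus terminals `T`. -/
abbrev Symb (N T : Type) := N ⊕ T

/-- `alph w` is the set of symbols occurring in the string `w`. -/
def alph {α : Type} (w : List α) : Set α := {a | a ∈ w}

/-- A (nonerasing) random context grammar: finitely many productions
`(A → x, Per, For)` with `A ∈ N`, `x ∈ (N ∪ T)⁺`, `Per, For ⊆ N`. -/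
structure RCG (N T : Type) where
  rules : Set (N × List (Symb N T) × Set N × Set N)
  fin : rules.Finite
  ne : ∀ r ∈ rules, r.2.1 ≠ []
  start : N

/-- One derivation step of a random context grammar.  The flag `incl` tells whether
the rewritten symbol is included in the context check (`true`: conditions checked
against `alph (uAv)`; `false`: against `alph (uv)`). -/
def RCG.Step {N T : Type} (G : RCG N T) (incl : Bool)
    (s₁ s₂ : List (Symb N T)) : Prop :=
  ∃ A x Per For u v, (A, x, Per, For) ∈ G.rules ∧
    s₁ = u ++ Sum.inl A :: v ∧ s₂ = u ++ x ++ v ∧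
    (∀ B ∈ Per, Sum.inl B ∈ alph (if incl then s₁ else u ++ v)) ∧
    (∀ B ∈ For, Sum.inl B ∉ alph (if incl then s₁ else u ++ v))

/-- The language of a random context grammar (under the chosen derivation definition). -/
def RCG.Lang {N T : Type} (G : RCG N T) (incl : Bool) : Set (List T) :=
  {w | Relation.ReflTransGen (G.Step incl) [Sum.inl G.start] (w.map Sum.inr)}

/-- The family of random context languages over terminal alphabet `T`
(standard definition: rewritten symbol excluded from the context check). -/
def RC (T : Type) : Set (Set (List T)) :=
  {L | ∃ (N : Type) (G : RCG N T), G.Lang false = L}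

/-- A (nonerasing) semi-conditional grammar of degree (1,1): productions
`(A → x, Per, For)` with `Per, For ⊆ N ∪ T` of cardinality at most one. -/
structure SCG (N T : Type) where
  rules : Set (N × List (Symb N T) × Set (Symb N T) × Set (Symb N T))
  fin : rules.Finite
  ne : ∀ r ∈ rules, r.2.1 ≠ []
  per1 : ∀ r ∈ rules, r.2.2.1.Subsingleton
  for1 : ∀ r ∈ rules, r.2.2.2.Subsingleton
  start : N

/-- One derivation step of a semi-conditional grammar; `incl` as in `RCG.Step`. -/
def SCG.Step {N T : Type} (G : SCG N T) (incl : Bool)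
    (s₁ s₂ : List (Symb N T)) : Prop :=
  ∃ A x Per For u v, (A, x, Per, For) ∈ G.rules ∧
    s₁ = u ++ Sum.inl A :: v ∧ s₂ = u ++ x ++ v ∧
    Per ⊆ alph (if incl then s₁ else u ++ v) ∧
    (∀ a ∈ For, a ∉ alph (if incl then s₁ else u ++ v))

/-- The language of a semi-conditional grammar. -/
def SCG.Lang {N T : Type} (G : SCG N T) (incl : Bool) : Set (List T) :=
  {w | Relation.ReflTransGen (G.Step incl) [Sum.inl G.start] (w.map Sum.inr)}

/-- The family SC(1,1): inclusive derivation definition (context `alph (uAv)`). -/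
def SC11 (T : Type) : Set (Set (List T)) :=
  {L | ∃ (N : Type) (G : SCG N T), G.Lang true = L}

/-- The family SC'(1,1): exclusive derivation definition (context `alph (uv)`). -/
def SC11' (T : Type) : Set (Set (List T)) :=
  {L | ∃ (N : Type) (G : SCG N T), G.Lang false = L}

/-- Auxiliary: the exclusive-semantics grammar equivalent to `G`. -/
def SCG.toExcl {N T : Type} (G : SCG N T) : SCG N T where
  rules := (fun r => (r.1, r.2.1, r.2.2.1 \ {Sum.inl r.1}, r.2.2.2)) ''
      {r ∈ G.rules | Sum.inl r.1 ∉ r.2.2.2}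
  fin := (G.fin.subset (Set.sep_subset _ _)).image _
  ne := by rintro r ⟨q, ⟨hq, _⟩, rfl⟩; exact G.ne q hq
  per1 := by rintro r ⟨q, ⟨hq, _⟩, rfl⟩; exact (G.per1 q hq).anti Set.diff_subset
  for1 := by rintro r ⟨q, ⟨hq, _⟩, rfl⟩; exact G.for1 q hq
  start := G.start

lemma mem_alph {α : Type} {a : α} {w : List α} : a ∈ alph w ↔ a ∈ w := Iff.rfl

lemma SCG.toExcl_step {N T : Type} (G : SCG N T) :
    G.toExcl.Step false = G.Step true := by
  funext s₁ s₂
  apply propext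
  constructor
  · rintro ⟨A, x, Per, For, u, v, ⟨q, ⟨hq, hA⟩, heq⟩, rfl, rfl, hper, hfor⟩
    obtain ⟨rfl, rfl, rfl, rfl⟩ :
        q.1 = A ∧ q.2.1 = x ∧ q.2.2.1 \ {Sum.inl q.1} = Per ∧ q.2.2.2 = For := by
      simpa [Prod.ext_iff] using heq
    refine ⟨q.1, q.2.1, q.2.2.1, q.2.2.2, u, v, hq, rfl, rfl, ?_, ?_⟩
    · intro p hp
      by_cases hpA : p = Sum.inl q.1
      · rw [if_pos rfl]; simp [hpA, alph]
      · have := hper ⟨hp, hpA⟩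
        rw [if_neg Bool.false_ne_true] at this
        rw [if_pos rfl]
        simp only [alph, Set.mem_setOf_eq, List.mem_append,
          List.mem_cons] at this ⊢
        tauto
    · intro a ha
      have haA : a ≠ Sum.inl q.1 := fun h => hA (h ▸ ha)
      have := hfor a ha
      rw [if_neg Bool.false_ne_true] at this
      rw [if_pos rfl]
      simp only [alph, Set.mem_setOf_eq, List.mem_append,
        List.mem_cons] at this ⊢
      tauto
  · rintro ⟨A, x, Per, For, u, v, hq, rfl, rfl, hper, hfor⟩
    have hA : Sum.inl A ∉ For := fun h => hfor _ h (by rw [if_pos rfl]; simp [alph])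
    refine ⟨A, x, Per \ {Sum.inl A}, For, u, v,
      ⟨(A, x, Per, For), ⟨hq, hA⟩, rfl⟩, rfl, rfl, ?_, ?_⟩
    · rintro p ⟨hp, hpA⟩
      have := hper hp
      rw [if_pos rfl] at this
      rw [if_neg Bool.false_ne_true]
      simp only [Set.mem_singleton_iff] at hpA
      simp only [alph, Set.mem_setOf_eq, List.mem_append,
        List.mem_cons] at this ⊢
      tauto
    · intro a ha
      have := hfor a ha
      rw [if_pos rfl] at this
      rw [if_neg Bool.false_ne_true]
      simp only [alph, Set.mem_setOf_eq, List.mem_append,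
        List.mem_cons] at this ⊢
      tauto

/-- every semi-conditional grammar of degree (1,1) with the inclusive
derivation definition has an equivalent one with the exclusive definition;
hence SC(1,1) ⊆ SC'(1,1). -/
theorem sc11_to_excl (T : Type) :
    (∀ (N : Type) (G : SCG N T), ∃ (N' : Type) (G' : SCG N' T),
        G'.Lang false = G.Lang true) ∧
    SC11 T ⊆ SC11' T := by
  have main : ∀ (N : Type) (G : SCG N T), ∃ (N' : Type) (G' : SCG N' T),
      G'.Lang false = G.Lang true := by
    intro N G
    refine ⟨N, G.toExcl, ?_⟩
    unfold SCG.Lang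
    rw [G.toExcl_step]
    rfl
  refine ⟨main, ?_⟩
  rintro L ⟨N, G, rfl⟩
  obtain ⟨N', G', h⟩ := main N G
  exact ⟨N', G', h⟩
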